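/- arXiv:2402.06338 — 8 statements merged into one kernel-verified Lean document; each statement's English description precedes it below -/
import Mathlib

section
/- For every integer k ≥ 1, every finite simple graph with at least one vertex whose average degree is at least 4k (i.e., 2|E(G)| ≥ 4k·|V(G)|) contains a (k+1)-connected subgraph. -/
/-- A graph is `k`-connected if it has at least `k+1` vertices and deleting any set of
at most `k-1` vertices leaves a connected (in particular nonempty) graph. -/
def SimpleGraph.IsKConnected {V : Type*} (G : SimpleGraph V) (k : ℕ) : Prop :=
  k + 1 ≤ Nat.card V ∧ ∀ S : Set V, S.ncard ≤ k - 1 → (G.induce Sᶜ).Connected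

/-- A graph is fragile if it has no 3-connected subgraph. -/
def SimpleGraph.Fragile {V : Type*} (G : SimpleGraph V) : Prop :=
  ∀ H : G.Subgraph, ¬ H.coe.IsKConnected 3

/-- A graph is `m`-fragile if every 3-connected subgraph of it is `(m-1)`-colourable. -/
def SimpleGraph.MFragile {V : Type*} (m : ℕ) (G : SimpleGraph V) : Prop :=
  ∀ H : G.Subgraph, H.coe.IsKConnected 3 → H.coe.Colorable (m - 1)

/-!
Call a finite vertex set `s` dense if `|s| ≥ 2k` and `e(s) > 2k(|s| - k)`. The bound on the average
degree makes the whole vertex set dense; let `t` be an inclusion-minimal dense set. Deleting a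
vertex of degree at most `2k` keeps a set dense, so `G[t]` has minimum degree above `2k`. Hence if
`(A, B)` is a separation of `G[t]` with both sides proper, each side contains a vertex together with
its neighbourhood, so `A` and `B` are proper subsets of `t` with more than `2k` vertices and are not
dense. Then `e(t) ≤ e(A) + e(B) ≤ 2k(|A| + |B| - 2k)`, and density of `t` forces `|A ∩ B| > k`:
`G[t]` is `(k+1)`-connected.
-/

open Finset

namespace SimpleGraph

variable {V : Type*} {G : SimpleGraph V}

variable (G) in
def IsSeparation (a b : Finset V) : Prop :=
  ∀ x ∈ a, x ∉ b → ∀ y ∈ b, y ∉ a → ¬ G.Adj x y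

theorem IsSeparation.symm {a b : Finset V} (h : G.IsSeparation a b) : G.IsSeparation b a :=
  fun x hxb hxa y hya hyb hxy => h y hya hyb x hxb hxa hxy.symm

theorem IsSeparation.card_adj_lt_card [DecidableEq V] [DecidableRel G.Adj] {a b : Finset V}
    (h : G.IsSeparation a b) {x : V} (hxa : x ∈ a) (hxb : x ∉ b) :
    #{w ∈ a ∪ b | G.Adj x w} < #a := by
  have hsub : insert x {w ∈ a ∪ b | G.Adj x w} ⊆ a := by
    refine insert_subset hxa fun w hw => ?_
    obtain ⟨hw, hxw⟩ := mem_filter.mp hw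
    by_contra hwa
    exact h x hxa hxb w ((mem_union.mp hw).resolve_left hwa) hwa hxw
  have hx : x ∉ {w ∈ a ∪ b | G.Adj x w} := fun hx => G.irrefl (mem_filter.mp hx).2
  simpa [card_insert_of_notMem hx] using card_le_card hsub

theorem isKConnected_of_lt_card_inter {W : Type*} [Fintype W] [DecidableEq W]
    {K : SimpleGraph W} {k : ℕ} (hcard : k + 2 ≤ Nat.card W)
    (h : ∀ a b : Finset W, a ∪ b = univ → K.IsSeparation a b →
      (a \ b).Nonempty → (b \ a).Nonempty → k < #(a ∩ b)) :
    K.IsKConnected (k + 1) := by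
  classical
  refine ⟨hcard, fun S hS => ?_⟩
  rw [add_tsub_cancel_right] at hS
  have hne : Sᶜ.Nonempty := by
    refine Set.nonempty_compl.mpr fun hS_univ => ?_
    rw [hS_univ, Set.ncard_univ] at hS
    omega
  refine (connected_iff _).mpr ⟨fun x y => ?_, hne.to_subtype⟩
  by_contra hxy
  let R : Finset W := {w | ∃ hw : w ∈ Sᶜ, (K.induce Sᶜ).Reachable x ⟨w, hw⟩}
  have hxR : ↑x ∈ R := mem_filter.mpr ⟨mem_univ _, x.2, Reachable.refl x⟩
  have hyR : ↑y ∉ R := fun hy => hxy (by simpa using (mem_filter.mp hy).2)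
  have hsep : K.IsSeparation (R ∪ S.toFinset) Rᶜ := by
    intro u hu huR v _ hv hadj
    have hvR : v ∉ R := fun h => hv (mem_union_left _ h)
    have hvS : v ∈ Sᶜ := fun h => hv (mem_union_right _ (Set.mem_toFinset.mpr h))
    obtain ⟨hu, hxu⟩ := (mem_filter.mp (by simpa using huR : u ∈ R)).2
    have hadj' : (K.induce Sᶜ).Adj ⟨u, hu⟩ ⟨v, hvS⟩ := hadj
    exact hvR (mem_filter.mpr ⟨mem_univ _, hvS, hxu.trans hadj'.reachable⟩)
  have hlt := h (R ∪ S.toFinset) Rᶜ (by ext; simp; tauto) hsep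
    ⟨x, by simpa using hxR⟩ ⟨y, by simpa [hyR] using Set.mem_compl_iff _ _ |>.mp y.2⟩
  have hinter : (R ∪ S.toFinset) ∩ Rᶜ ⊆ S.toFinset := by
    intro w hw
    simp only [mem_inter, mem_union, mem_compl] at hw
    tauto
  have := card_le_card hinter
  rw [← Set.ncard_eq_toFinset_card'] at this
  omega

variable [DecidableRel G.Adj] {k : ℕ}

variable (G) in
def edgesIn (s : Finset V) : Finset (Sym2 V) :=
  s.sym2.filter (· ∈ G.edgeSet)

theorem mem_edgesIn {s : Finset V} {e : Sym2 V} :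
    e ∈ G.edgesIn s ↔ e ∈ G.edgeSet ∧ ∀ v ∈ e, v ∈ s := by
  rw [edgesIn, mem_filter, mem_sym2_iff, and_comm]

theorem edgesIn_univ [Fintype V] [Fintype G.edgeSet] : G.edgesIn univ = G.edgeFinset := by
  ext e
  simp [mem_edgesIn]

theorem two_mul_card_edgesIn_le (s : Finset V) : 2 * #(G.edgesIn s) ≤ #s * (#s - 1) := by
  classical
  have hdisj : Disjoint (G.edgesIn s) (s.image Sym2.diag) := by
    refine Finset.disjoint_left.mpr fun e he hdiag => ?_
    obtain ⟨v, -, rfl⟩ := mem_image.mp hdiag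
    exact G.not_isDiag_of_mem_edgeSet (mem_edgesIn.mp he).1 (Sym2.diag_isDiag v)
  have hsub : G.edgesIn s ∪ s.image Sym2.diag ⊆ s.sym2 := by
    refine union_subset (filter_subset _ _) fun e he => ?_
    obtain ⟨v, hv, rfl⟩ := mem_image.mp he
    exact mk_mem_sym2_iff.mpr ⟨hv, hv⟩
  have hcard := card_le_card hsub
  rw [card_union_of_disjoint hdisj, card_image_of_injective _ Sym2.diag_injective, card_sym2,
    Nat.choose_succ_succ, Nat.choose_one_right, Nat.choose_two_right] at hcard
  have := Nat.mul_div_le (#s * (#s - 1)) 2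
  omega

theorem card_edgesIn_le_card_edgesIn_erase_add [DecidableEq V] (s : Finset V) (v : V) :
    #(G.edgesIn s) ≤ #(G.edgesIn (s.erase v)) + #{w ∈ s | G.Adj v w} := by
  have hsub : G.edgesIn s ⊆ G.edgesIn (s.erase v) ∪ {w ∈ s | G.Adj v w}.image (s(v, ·)) := by
    intro e he
    obtain ⟨hadj, hs⟩ := mem_edgesIn.mp he
    by_cases hv : v ∈ e
    · obtain ⟨w, rfl⟩ := Sym2.mem_iff_exists.mp hv
      exact mem_union_right _
        (mem_image_of_mem _ (mem_filter.mpr ⟨hs w (Sym2.mem_mk_right v w), hadj⟩))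
    · exact mem_union_left _ (mem_edgesIn.mpr
        ⟨hadj, fun w hw => mem_erase.mpr ⟨fun h => hv (h ▸ hw), hs w hw⟩⟩)
  calc #(G.edgesIn s)
      ≤ #(G.edgesIn (s.erase v)) + #({w ∈ s | G.Adj v w}.image (s(v, ·))) :=
        (card_le_card hsub).trans (card_union_le _ _)
    _ ≤ _ := by gcongr; exact card_image_le

theorem card_edgesIn_le_add_of_isSeparation [DecidableEq V] {s a b : Finset V}
    (hs : s ⊆ a ∪ b) (h : G.IsSeparation a b) :
    #(G.edgesIn s) ≤ #(G.edgesIn a) + #(G.edgesIn b) := by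
  refine (card_le_card fun e he => ?_).trans (card_union_le _ _)
  induction e with
  | _ x y =>
    obtain ⟨hxy, hmem⟩ := mem_edgesIn.mp he
    have hx := mem_union.mp (hs (hmem x (Sym2.mem_mk_left x y)))
    have hy := mem_union.mp (hs (hmem y (Sym2.mem_mk_right x y)))
    have hxy' := h x
    have hyx' := h y
    simp only [mem_union, mem_edgesIn, Sym2.mem_iff, forall_eq_or_imp, forall_eq]
    rw [mem_edgeSet] at hxy ⊢
    have := hxy.symm
    tauto

variable (G) in
def IsMaderDense (k : ℕ) (s : Finset V) : Prop :=
  2 * k ≤ #s ∧ 2 * k * #s < #(G.edgesIn s) + 2 * k * k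

theorem isMaderDense_univ [Fintype V] [Nonempty V] (hk : 1 ≤ k)
    (hdeg : 4 * k * Fintype.card V ≤ 2 * #G.edgeFinset) : G.IsMaderDense k univ := by
  have hE := two_mul_card_edgesIn_le (G := G) univ
  rw [IsMaderDense, edgesIn_univ, card_univ]
  rw [edgesIn_univ, card_univ] at hE
  have hn : 0 < Fintype.card V := Fintype.card_pos
  have h4k : 4 * k ≤ Fintype.card V - 1 :=
    Nat.le_of_mul_le_mul_right (by linarith [hdeg, hE]) hn
  constructor
  · omega
  · nlinarith

theorem IsMaderDense.two_mul_lt_card {s : Finset V} (hs : G.IsMaderDense k s) (hk : 1 ≤ k) :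
    2 * k < #s := by
  obtain ⟨hle, hlt⟩ := hs
  by_contra! hge
  have hcard : #s = 2 * k := le_antisymm hge hle
  have hE := two_mul_card_edgesIn_le (G := G) s
  rw [hcard] at hE hlt
  have : 2 * k * (2 * k - 1) + 2 * k = 2 * k * (2 * k) := by
    rw [← Nat.mul_add_one, Nat.sub_add_cancel (by omega)]
  nlinarith

theorem IsMaderDense.erase [DecidableEq V] {s : Finset V} (hs : G.IsMaderDense k s)
    (hk : 1 ≤ k) {v : V} (hv : v ∈ s) (hdeg : #{w ∈ s | G.Adj v w} ≤ 2 * k) :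
    G.IsMaderDense k (s.erase v) := by
  have hlt := hs.two_mul_lt_card hk
  have hE := card_edgesIn_le_card_edgesIn_erase_add (G := G) s v
  obtain ⟨-, hdense⟩ := hs
  rw [IsMaderDense, card_erase_of_mem hv]
  have : 2 * k * (#s - 1) + 2 * k = 2 * k * #s := by
    rw [← Nat.mul_add_one, Nat.sub_add_cancel (by omega)]
  constructor
  · omega
  · nlinarith

variable [DecidableEq V] {t : Finset V}

theorem two_mul_lt_card_adj_of_minimal (ht : Minimal (G.IsMaderDense k) t) (hk : 1 ≤ k)
    {v : V} (hv : v ∈ t) : 2 * k < #{w ∈ t | G.Adj v w} := by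
  by_contra! hdeg
  exact ht.not_prop_of_lt (erase_ssubset hv) (ht.prop.erase hk hv hdeg)

theorem lt_card_inter_of_minimal (ht : Minimal (G.IsMaderDense k) t) (hk : 1 ≤ k)
    {a b : Finset V} (hab : a ∪ b = t) (hsep : G.IsSeparation a b)
    (ha : (a \ b).Nonempty) (hb : (b \ a).Nonempty) : k < #(a ∩ b) := by
  by_contra! hinter
  obtain ⟨x, hx⟩ := ha
  obtain ⟨y, hy⟩ := hb
  obtain ⟨hxa, hxb⟩ := mem_sdiff.mp hx
  obtain ⟨hyb, hya⟩ := mem_sdiff.mp hy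
  have hlarge_a := hsep.card_adj_lt_card hxa hxb
  have hlarge_b := hsep.symm.card_adj_lt_card hyb hya
  rw [hab] at hlarge_a
  rw [union_comm, hab] at hlarge_b
  have hdeg_x := two_mul_lt_card_adj_of_minimal ht hk (hab ▸ mem_union_left b hxa)
  have hdeg_y := two_mul_lt_card_adj_of_minimal ht hk (hab ▸ mem_union_right a hyb)
  have hsparse_a : ¬ G.IsMaderDense k a := ht.not_prop_of_lt <|
    (ssubset_iff_of_subset (hab ▸ subset_union_left)).mpr ⟨y, hab ▸ mem_union_right a hyb, hya⟩
  have hsparse_b : ¬ G.IsMaderDense k b := ht.not_prop_of_lt <|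
    (ssubset_iff_of_subset (hab ▸ subset_union_right)).mpr ⟨x, hab ▸ mem_union_left b hxa, hxb⟩
  simp only [IsMaderDense, not_and, not_lt] at hsparse_a hsparse_b
  have hEa := hsparse_a (by omega)
  have hEb := hsparse_b (by omega)
  have hE := card_edgesIn_le_add_of_isSeparation (G := G) hab.ge hsep
  have hcard := card_union_add_card_inter a b
  rw [hab] at hcard
  have hdense := ht.prop.2
  nlinarith

theorem isKConnected_induce_of_minimal (ht : Minimal (G.IsMaderDense k) t) (hk : 1 ≤ k) :
    ((⊤ : G.Subgraph).induce t).coe.IsKConnected (k + 1) := by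
  set H := (⊤ : G.Subgraph).induce t
  have : Fintype H.verts := Fintype.ofFinset t fun _ => Iff.rfl
  let f := Function.Embedding.subtype (· ∈ H.verts)
  have hcard : Nat.card H.verts = #t := by
    rw [Nat.card_coe_set_eq]
    exact Set.ncard_coe_finset t
  have hlt := ht.prop.two_mul_lt_card hk
  refine isKConnected_of_lt_card_inter (by rw [hcard]; omega)
    fun a b hab hsep ha hb => ?_
  have hunion : a.map f ∪ b.map f = t := by
    rw [← map_union, hab]
    ext v
    simp [f, H]
  have hsep' : G.IsSeparation (a.map f) (b.map f) := by
    intro x hx hxb y hy hya hxy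
    obtain ⟨x, hxa, rfl⟩ := mem_map.mp hx
    obtain ⟨y, hyb, rfl⟩ := mem_map.mp hy
    exact hsep x hxa (fun h => hxb (mem_map_of_mem f h)) y hyb (fun h => hya (mem_map_of_mem f h))
      ⟨x.2, y.2, hxy⟩
  have := lt_card_inter_of_minimal ht hk hunion hsep' (by rw [← Finset.map_sdiff]; exact ha.map)
    (by rw [← Finset.map_sdiff]; exact hb.map)
  rwa [← map_inter, card_map] at this

end SimpleGraph

/-- Mader 1972: every nonempty graph with average degree at least `4k`
contains a `(k+1)`-connected subgraph. -/
theorem statement0 {V : Type*} [Fintype V] (G : SimpleGraph V) [DecidableRel G.Adj]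
    (k : ℕ) (hk : 1 ≤ k) (hV : Nonempty V)
    (hdeg : 4 * k * Fintype.card V ≤ 2 * G.edgeFinset.card) :
    ∃ H : G.Subgraph, H.coe.IsKConnected (k + 1) := by
  classical
  obtain ⟨t, -, ht⟩ :=
    exists_minimal_le_of_wellFoundedLT _ _ (SimpleGraph.isMaderDense_univ hk hdeg)
  exact ⟨_, SimpleGraph.isKConnected_induce_of_minimal ht hk⟩
end

section
/- Every fragile finite simple graph G on at least 4 vertices satisfies 2·|E(G)| ≤ 5·|V(G)| − 10. -/
/-!
Write `e(A)` for the number of edges of `G[A]`. We show `2 e(A) + 10 ≤ 5 |A|` for every vertex set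
`A` with `|A| ≥ 4`, by strong induction on `|A|`. If some vertex has at most two neighbours in `A`,
delete it (for `|A| = 4` the remaining three vertices span at most three edges). Otherwise `G[A]`
has minimum degree at least `3` but is not `3`-connected, so a set `S` of at most two vertices
separates it: `A = B₁ ∪ B₂` with `B₁ ∩ B₂ = S` and no edges between `B₁ \ S` and `B₂ \ S`.
A vertex of `Bᵢ \ S` has its at least three neighbours inside `Bᵢ`, so `|Bᵢ| ≥ 4`, and
`2 e(A) ≤ 2 e(B₁) + 2 e(B₂) ≤ 5 (|A| + 2) - 20`.
-/

open Finset

namespace SimpleGraph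

theorem Embedding.exists_closed_of_not_preconnected {W V : Type*} {K : SimpleGraph W}
    {G : SimpleGraph V} (f : K ↪g G) (h : ¬ K.Preconnected) :
    ∃ C : Set V, C ⊆ Set.range f ∧ C.Nonempty ∧ (Set.range f \ C).Nonempty ∧
      ∀ x ∈ C, ∀ y ∈ Set.range f, G.Adj x y → y ∈ C := by
  obtain ⟨u, v, huv⟩ : ∃ u v, ¬ K.Reachable u v := by simpa [Preconnected] using h
  refine ⟨f '' {w | K.Reachable u w}, Set.image_subset_range _ _, ⟨f u, u, .refl u, rfl⟩,
    ⟨f v, ⟨v, rfl⟩, ?_⟩, ?_⟩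
  · rintro ⟨w, hw, hwv⟩
    exact huv (f.injective hwv ▸ hw)
  · rintro _ ⟨w, hw, rfl⟩ _ ⟨z, rfl⟩ hwz
    exact ⟨z, hw.trans (f.map_adj_iff.mp hwz).reachable, rfl⟩

variable {V : Type*} {G : SimpleGraph V}

theorem Fragile.exists_separation [Fintype V] [DecidableEq V] (hG : G.Fragile) {A : Finset V}
    (hA : 4 ≤ #A) :
    ∃ S C : Finset V, S ⊆ A ∧ #S ≤ 2 ∧ C ⊆ A \ S ∧ C.Nonempty ∧ ((A \ S) \ C).Nonempty ∧
      ∀ x ∈ C, ∀ y ∈ A \ S, G.Adj x y → y ∈ C := by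
  classical
  set H := (⊤ : G.Subgraph).induce (A : Set V)
  have hcard : Nat.card H.verts = #A := by
    rw [Nat.card_coe_set_eq, Subgraph.induce_verts, Set.ncard_coe_finset]
  obtain ⟨S₀, hS₀, hdisc⟩ : ∃ S₀ : Set H.verts, S₀.ncard ≤ 2 ∧ ¬ (H.coe.induce S₀ᶜ).Connected := by
    have h := hG H
    rw [IsKConnected, hcard] at h
    push Not at h
    exact h hA
  have : Nonempty ↥S₀ᶜ := (Set.nonempty_compl.mpr fun h => by
    rw [h, Set.ncard_univ, hcard] at hS₀; omega).to_subtype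
  let f : H.coe.induce S₀ᶜ ↪g G :=
    ⟨⟨fun x => x.1.1, fun x y h => Subtype.ext (Subtype.ext h)⟩,
      fun {x y} => ⟨fun h => ⟨x.1.2, y.1.2, h⟩, fun h => h.2.2⟩⟩
  obtain ⟨C, hCf, hCne, hfC, hC⟩ := f.exists_closed_of_not_preconnected
    fun h => hdisc ((connected_iff _).mpr ⟨h, inferInstance⟩)
  set S := (Subtype.val '' S₀).toFinset
  have hrange : Set.range f = ↑(A \ S) := by
    ext x
    simp only [S, Set.mem_range, coe_sdiff, Set.coe_toFinset, Set.mem_sdiff, mem_coe,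
      Set.mem_image, not_exists, not_and]
    constructor
    · rintro ⟨⟨⟨y, hy⟩, hyS⟩, rfl⟩
      exact ⟨hy, fun z hz hzy => hyS ((Subtype.ext hzy : z = ⟨y, hy⟩) ▸ hz)⟩
    · rintro ⟨hx, hxS⟩
      exact ⟨⟨⟨x, hx⟩, fun h => hxS _ h rfl⟩, rfl⟩
  refine ⟨S, C.toFinset, fun x hx => ?_, ?_, Set.toFinset_subset.mpr (hrange ▸ hCf),
    Set.toFinset_nonempty.mpr hCne, ?_, fun x hx y hy hxy => ?_⟩
  · obtain ⟨z, -, rfl⟩ := Set.mem_toFinset.mp hx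
    exact z.2
  · rw [← Set.ncard_eq_toFinset_card']
    exact (Set.ncard_image_le).trans hS₀
  · rw [← coe_nonempty, coe_sdiff, Set.coe_toFinset, ← hrange]
    exact hfC
  · rw [Set.mem_toFinset] at hx ⊢
    exact hC x hx y (hrange ▸ hy) hxy

variable [DecidableRel G.Adj]

variable (G) in
/-- `#(G.adjPairs A) = 2 e(A)`: each edge of `G[A]` is counted in both orientations. -/
def adjPairs (A : Finset V) : Finset (V × V) := {p ∈ A ×ˢ A | G.Adj p.1 p.2}

theorem card_filter_adj_lt_card {A B : Finset V} {v : V} (hv : v ∈ B)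
    (hN : {w ∈ A | G.Adj v w} ⊆ B) : #{w ∈ A | G.Adj v w} < #B :=
  card_lt_card <| (ssubset_iff_of_subset hN).mpr ⟨v, hv, fun h => G.irrefl (mem_filter.mp h).2⟩

theorem card_adjPairs_univ [Fintype V] : #(G.adjPairs univ) = 2 * #G.edgeFinset := by
  rw [two_mul_card_edgeFinset, adjPairs, univ_product_univ]

theorem card_adjPairs_le (A : Finset V) : #(G.adjPairs A) ≤ #A * #A - #A := by
  rw [← offDiag_card]
  refine card_le_card fun p hp => ?_
  simp only [adjPairs, mem_filter, mem_product] at hp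
  exact mem_offDiag.mpr ⟨hp.1.1, hp.1.2, hp.2.ne⟩

variable [DecidableEq V]

theorem card_adjPairs_le_erase (A : Finset V) (v : V) :
    #(G.adjPairs A) ≤ #(G.adjPairs (A.erase v)) + 2 * #{w ∈ A | G.Adj v w} := by
  set N := {w ∈ A | G.Adj v w}
  have hsub : G.adjPairs A ⊆ G.adjPairs (A.erase v) ∪ {v} ×ˢ N ∪ N ×ˢ {v} := by
    rintro ⟨x, y⟩ hxy
    simp only [adjPairs, N, mem_union, mem_filter, mem_product, mem_erase, mem_singleton] at hxy ⊢
    have := hxy.2.symm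
    grind
  calc #(G.adjPairs A) ≤ #(G.adjPairs (A.erase v) ∪ {v} ×ˢ N ∪ N ×ˢ {v}) := card_le_card hsub
    _ ≤ #(G.adjPairs (A.erase v)) + #({v} ×ˢ N) + #(N ×ˢ {v}) :=
      (card_union_le _ _).trans (Nat.add_le_add_right (card_union_le _ _) _)
    _ = #(G.adjPairs (A.erase v)) + 2 * #N := by simp only [card_product, card_singleton]; ring

theorem adjPairs_subset_union_of_closed {A S C : Finset V}
    (hC : ∀ x ∈ C, ∀ y ∈ A \ S, G.Adj x y → y ∈ C) :
    G.adjPairs A ⊆ G.adjPairs (C ∪ S) ∪ G.adjPairs (A \ C) := by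
  rintro ⟨x, y⟩ hxy
  simp only [adjPairs, mem_union, mem_filter, mem_product, mem_sdiff] at hxy hC ⊢
  have := hxy.2.symm
  grind

theorem filter_adj_subset_union_of_closed {A S C : Finset V}
    (hC : ∀ x ∈ C, ∀ y ∈ A \ S, G.Adj x y → y ∈ C) {u : V} (hu : u ∈ C) :
    {w ∈ A | G.Adj u w} ⊆ C ∪ S := by
  intro w hw
  obtain ⟨hwA, huw⟩ := mem_filter.mp hw
  by_cases hwS : w ∈ S
  · exact mem_union_right _ hwS
  · exact mem_union_left _ (hC u hu w (mem_sdiff.mpr ⟨hwA, hwS⟩) huw)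

theorem filter_adj_subset_sdiff_of_closed {A S C : Finset V}
    (hC : ∀ x ∈ C, ∀ y ∈ A \ S, G.Adj x y → y ∈ C) {v : V} (hv : v ∈ A \ S) (hvC : v ∉ C) :
    {w ∈ A | G.Adj v w} ⊆ A \ C := by
  intro w hw
  obtain ⟨hwA, hvw⟩ := mem_filter.mp hw
  exact mem_sdiff.mpr ⟨hwA, fun hwC => hvC (hC w hwC v hv hvw.symm)⟩

theorem Fragile.card_adjPairs_add_ten_le [Fintype V] (hG : G.Fragile) {A : Finset V}
    (hA : 4 ≤ #A) : #(G.adjPairs A) + 10 ≤ 5 * #A := by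
  induction A using Finset.strongInduction with
  | H A ih =>
  by_cases hlow : ∃ v ∈ A, #{w ∈ A | G.Adj v w} ≤ 2
  · obtain ⟨v, hv, hdeg⟩ := hlow
    have herase := G.card_adjPairs_le_erase A v
    have hcard := card_erase_of_mem hv
    rcases hA.eq_or_lt with h4 | h5
    · have := G.card_adjPairs_le (A.erase v)
      rw [hcard, ← h4] at this
      omega
    · have := ih _ (erase_ssubset hv) (by omega)
      omega
  · push Not at hlow
    obtain ⟨S, C, hSA, hS, hCAS, ⟨u, hu⟩, ⟨v, hv⟩, hC⟩ := hG.exists_separation hA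
    obtain ⟨⟨hvA, hvS⟩, hvC⟩ := mem_sdiff.mp hv |>.imp_left mem_sdiff.mp
    have hCA : C ⊆ A := hCAS.trans sdiff_subset
    have huA : u ∈ A := hCA hu
    have hB₁ : 4 ≤ #(C ∪ S) := Nat.lt_of_le_of_lt (hlow u huA) <|
      card_filter_adj_lt_card (mem_union_left _ hu) (filter_adj_subset_union_of_closed hC hu)
    have hB₂ : 4 ≤ #(A \ C) := Nat.lt_of_le_of_lt (hlow v hvA) <|
      card_filter_adj_lt_card (mem_sdiff.mpr ⟨hvA, hvC⟩)
        (filter_adj_subset_sdiff_of_closed hC (mem_sdiff.mpr ⟨hvA, hvS⟩) hvC)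
    have hlt₁ : C ∪ S ⊂ A := (ssubset_iff_of_subset (union_subset hCA hSA)).mpr
      ⟨v, hvA, by simp [hvC, hvS]⟩
    have hlt₂ : A \ C ⊂ A := sdiff_ssubset hCA ⟨u, hu⟩
    have hsize : #(C ∪ S) + #(A \ C) ≤ #A + 2 := by
      have := card_union_le C S
      have := card_sdiff_of_subset hCA
      have := card_le_card hCA
      omega
    have hsplit := (card_le_card (G.adjPairs_subset_union_of_closed hC)).trans (card_union_le _ _)
    have := ih _ hlt₁ hB₁
    have := ih _ hlt₂ hB₂
    omega

end SimpleGraph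

/-- Every fragile graph on at least 4 vertices satisfies `2|E(G)| ≤ 5|V(G)| - 10`. -/
theorem statement8 {V : Type*} [Fintype V] (G : SimpleGraph V) [DecidableRel G.Adj]
    (hG : G.Fragile) (hV : 4 ≤ Fintype.card V) :
    2 * G.edgeFinset.card ≤ 5 * Fintype.card V - 10 := by
  classical
  have := hG.card_adjPairs_add_ten_le (by rwa [card_univ] : 4 ≤ #(univ : Finset V))
  rw [G.card_adjPairs_univ, card_univ] at this
  omega
end

section
/- Every fragile finite simple graph with at least one vertex contains a vertex of degree at most 4. -/
/-! Counting ordered adjacent pairs, `#(G.interedges s s) = 2 e(s)`. A fragile graph satisfies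
`2 e(s) + 10 ≤ 5 |s|` for every vertex set `s` with `|s| ≥ 4`, which rules out minimum degree
at least 5. The bound goes by strong induction on `|s|`: as `G[s]` is not 3-connected,
`s = A ∪ B ∪ T` with `|T| ≤ 2` and no edges between the nonempty sets `A` and `B`, so that
`e(s) + e(T) = e(A ∪ T) + e(B ∪ T)`; each side `X ∪ T` is either covered by the induction or has
at most 3 vertices and is counted directly. -/

open Finset

-- `n, nA, nB, nT` stand for `2 e` of `A ∪ B ∪ T, A ∪ T, B ∪ T, T`; `a, b, t` for `|A|, |B|, |T|`.
lemma add_ten_le_five_mul_of_split {n nA nB nT a b t : ℕ} (ha : 1 ≤ a) (hb : 1 ≤ b) (ht : t ≤ 2)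
    (hn : 4 ≤ a + b + t) (hT : nT ≤ t * (t - 1)) (hsplit : n + nT = nA + nB)
    (hA : 4 ≤ a + t ∧ nA + 10 ≤ 5 * (a + t) ∨ a + t ≤ 3 ∧ nA ≤ nT + a * (a - 1 + 2 * t))
    (hB : 4 ≤ b + t ∧ nB + 10 ≤ 5 * (b + t) ∨ b + t ≤ 3 ∧ nB ≤ nT + b * (b - 1 + 2 * t)) :
    n + 10 ≤ 5 * (a + b + t) := by
  have small {x : ℕ} (hx : x + t ≤ 3) : x * (x - 1 + 2 * t) ≤ x * 5 :=
    Nat.mul_le_mul_left x (by omega)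
  rcases hA with ⟨-, hA⟩ | ⟨hAt, hA⟩ <;> rcases hB with ⟨-, hB⟩ | ⟨hBt, hB⟩
  · omega
  · have := small hBt; omega
  · have := small hAt; omega
  · have : a ≤ 3 := by omega
    have : b ≤ 3 := by omega
    interval_cases t <;> interval_cases a <;> interval_cases b <;> omega

namespace SimpleGraph

section Separation

lemma exists_finset_separation_of_not_preconnected {W : Type*} [Fintype W] [DecidableEq W]
    {K : SimpleGraph W} (h : ¬ K.Preconnected) :
    ∃ A : Finset W, A.Nonempty ∧ Aᶜ.Nonempty ∧ ∀ a ∈ A, ∀ b ∈ Aᶜ, ¬ K.Adj a b := by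
  classical
  obtain ⟨x, y, hxy⟩ : ∃ x y, ¬ K.Reachable x y := by simpa [Preconnected] using h
  refine ⟨univ.filter (K.Reachable x), ⟨x, by simp⟩, ⟨y, by simpa using hxy⟩,
    fun a ha b hb hab => ?_⟩
  simp only [mem_compl, mem_filter, mem_univ, true_and] at ha hb
  exact hb (ha.trans hab.reachable)

variable {V : Type*} [DecidableEq V] {G : SimpleGraph V}

lemma Fragile.exists_separation_s9 (hG : G.Fragile) {s : Finset V} (hs : 4 ≤ #s) :
    ∃ A B T : Finset V, Disjoint A B ∧ Disjoint A T ∧ Disjoint B T ∧ A ∪ B ∪ T = s ∧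
      A.Nonempty ∧ B.Nonempty ∧ #T ≤ 2 ∧ ∀ a ∈ A, ∀ b ∈ B, ¬ G.Adj a b := by
  classical
  let H : G.Subgraph := (⊤ : G.Subgraph).induce s
  have : Fintype H.verts := Fintype.ofFinset s fun _ => Iff.rfl
  have hcard : H.verts.ncard = #s := Set.ncard_coe_finset s
  obtain ⟨S, hS, hdisc⟩ : ∃ S : Set H.verts, S.ncard ≤ 2 ∧ ¬ (H.coe.induce Sᶜ).Connected := by
    simpa [IsKConnected, Nat.card_coe_set_eq, hcard, hs.trans' (by norm_num : 3 + 1 ≤ 4)]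
      using hG H
  have : Nonempty ↥Sᶜ := by
    refine (Set.nonempty_compl.2 fun hS' => ?_).to_subtype
    rw [hS', Set.ncard_univ, Nat.card_coe_set_eq, hcard] at hS
    omega
  obtain ⟨A, hA, hAc, hsep⟩ := exists_finset_separation_of_not_preconnected fun h => hdisc ⟨h⟩
  let ι : ↥Sᶜ ↪ V := (Function.Embedding.subtype _).trans (Function.Embedding.subtype _)
  have hdisj (X : Finset ↥Sᶜ) :
      Disjoint (X.map ι) (S.toFinset.map (Function.Embedding.subtype _)) := by
    simp only [Finset.disjoint_left, mem_map, Set.mem_toFinset, not_exists, not_and]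
    rintro _ ⟨x, -, rfl⟩ y hy hyx
    exact x.2 (Subtype.ext hyx ▸ hy :)
  refine ⟨A.map ι, Aᶜ.map ι, S.toFinset.map (Function.Embedding.subtype _),
    (disjoint_map ι).2 disjoint_compl_right, hdisj A, hdisj Aᶜ, ?_, hA.map, hAc.map, ?_, ?_⟩
  · rw [← map_union, union_compl]
    ext v
    simp [ι, ← exists_or, em', H]
  · rw [card_map, ← Set.ncard_eq_toFinset_card']
    exact hS
  · simp only [mem_map]
    rintro _ ⟨a, ha, rfl⟩ _ ⟨b, hb, rfl⟩ hab
    exact hsep a ha b hb (by simpa [H] using ⟨a.1.2, b.1.2, hab⟩)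

end Separation

variable {V : Type*} (G : SimpleGraph V) [DecidableRel G.Adj]

lemma card_interedges_self_le (s : Finset V) : #(G.interedges s s) ≤ #s * (#s - 1) := by
  calc #(G.interedges s s) ≤ #s.offDiag := card_le_card fun e he => by
        rw [mem_interedges_iff] at he
        exact mem_offDiag.2 ⟨he.1, he.2.1, he.2.2.ne⟩
    _ = #s * (#s - 1) := by rw [offDiag_card, Nat.mul_sub_one]

lemma card_interedges_eq_zero {s t : Finset V} (h : ∀ a ∈ s, ∀ b ∈ t, ¬ G.Adj a b) :
    #(G.interedges s t) = 0 := by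
  rw [card_eq_zero, eq_empty_iff_forall_notMem]
  rintro ⟨a, b⟩ hab
  rw [mk_mem_interedges_iff] at hab
  exact h a hab.1 b hab.2.1 hab.2.2

lemma card_interedges_univ [Fintype V] : #(G.interedges univ univ) = ∑ v, G.degree v := by
  rw [interedges_def, card_filter, sum_product]
  refine sum_congr rfl fun v _ => ?_
  rw [← card_neighborFinset_eq_degree, neighborFinset_eq_filter, card_filter]

variable [DecidableEq V]

lemma card_interedges_union_left {s₁ s₂ : Finset V} (h : Disjoint s₁ s₂) (t : Finset V) :
    #(G.interedges (s₁ ∪ s₂) t) = #(G.interedges s₁ t) + #(G.interedges s₂ t) := by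
  rw [← card_union_of_disjoint (G.interedges_disjoint_left h t), interedges_def,
    union_product, filter_union, interedges_def, interedges_def]

lemma card_interedges_union_right (s : Finset V) {t₁ t₂ : Finset V} (h : Disjoint t₁ t₂) :
    #(G.interedges s (t₁ ∪ t₂)) = #(G.interedges s t₁) + #(G.interedges s t₂) := by
  rw [← card_union_of_disjoint (G.interedges_disjoint_right s h), interedges_def,
    product_union, filter_union, interedges_def, interedges_def]

variable {G}

lemma card_interedges_add_card_interedges_of_separates {A B T : Finset V} (hAB : Disjoint A B)
    (hAT : Disjoint A T) (hBT : Disjoint B T) (hsep : ∀ a ∈ A, ∀ b ∈ B, ¬ G.Adj a b) :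
    #(G.interedges (A ∪ B ∪ T) (A ∪ B ∪ T)) + #(G.interedges T T) =
      #(G.interedges (A ∪ T) (A ∪ T)) + #(G.interedges (B ∪ T) (B ∪ T)) := by
  have hABT : Disjoint (A ∪ B) T := disjoint_union_left.2 ⟨hAT, hBT⟩
  have hAB0 := G.card_interedges_eq_zero hsep
  have hBA0 := G.card_interedges_eq_zero fun b hb a ha hba => hsep a ha b hb hba.symm
  simp only [card_interedges_union_left, card_interedges_union_right, hAB, hAT, hBT, hABT]
  omega

lemma card_interedges_union_le {A T : Finset V} (hAT : Disjoint A T) :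
    #(G.interedges (A ∪ T) (A ∪ T)) ≤ #(G.interedges T T) + #A * (#A - 1 + 2 * #T) := by
  have hAA := G.card_interedges_self_le A
  have hAT' := G.card_interedges_le_mul A T
  have hTA := G.card_interedges_le_mul T A
  simp only [card_interedges_union_left, card_interedges_union_right, hAT]
  nlinarith

theorem Fragile.card_interedges_add_ten_le (hG : G.Fragile) {s : Finset V} (hs : 4 ≤ #s) :
    #(G.interedges s s) + 10 ≤ 5 * #s := by
  induction h : #s using Nat.strong_induction_on generalizing s with
  | _ n ih =>
  obtain ⟨A, B, T, hAB, hAT, hBT, rfl, hA, hB, hT, hsep⟩ := hG.exists_separation_s9 hs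
  have hcard : #(A ∪ B ∪ T) = #A + #B + #T := by
    rw [card_union_of_disjoint (disjoint_union_left.2 ⟨hAT, hBT⟩), card_union_of_disjoint hAB]
  have piece {X : Finset V} (hXT : Disjoint X T) (hX : #X + #T < n) :
      4 ≤ #X + #T ∧ #(G.interedges (X ∪ T) (X ∪ T)) + 10 ≤ 5 * (#X + #T) ∨
      #X + #T ≤ 3 ∧ #(G.interedges (X ∪ T) (X ∪ T)) ≤
        #(G.interedges T T) + #X * (#X - 1 + 2 * #T) := by
    rw [← card_union_of_disjoint hXT] at hX ⊢
    by_cases h4 : 4 ≤ #(X ∪ T)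
    · exact .inl ⟨h4, ih _ hX h4 rfl⟩
    · exact .inr ⟨by omega, card_interedges_union_le hXT⟩
  have ha := card_pos.2 hA
  have hb := card_pos.2 hB
  rw [← h, hcard]
  exact add_ten_le_five_mul_of_split ha hb hT (by omega)
    (G.card_interedges_self_le T)
    (card_interedges_add_card_interedges_of_separates hAB hAT hBT hsep)
    (piece hAT (by omega)) (piece hBT (by omega))

end SimpleGraph

/-- Every nonempty fragile graph contains a vertex of degree at most 4. -/
theorem statement9 {V : Type*} [Fintype V] (G : SimpleGraph V) [DecidableRel G.Adj]
    (hG : G.Fragile) (hV : Nonempty V) :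
    ∃ v : V, G.degree v ≤ 4 := by
  classical
  by_contra! hdeg
  obtain ⟨v⟩ := hV
  have hcard : 4 ≤ #(univ : Finset V) := by
    have := G.degree_lt_card_verts v
    have := hdeg v
    rw [card_univ]
    omega
  have hsum : 5 * #(univ : Finset V) ≤ #(G.interedges univ univ) := by
    rw [G.card_interedges_univ, card_eq_sum_ones, mul_sum]
    exact sum_le_sum fun v _ => by simpa using (hdeg v).nat_succ_le
  have := hG.card_interedges_add_ten_le hcard
  omega
end

section
/- Every fragile finite simple graph with girth at least 4 (i.e., containing no cycle of length 3) and at least one vertex contains a vertex of degree at most 3. -/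
open Set

namespace SimpleGraph

variable {V W : Type*} {G : SimpleGraph V}

theorem IsKConnected.of_iso {H : SimpleGraph W} {k : ℕ} (e : G ≃g H)
    (h : G.IsKConnected k) : H.IsKConnected k := by
  refine ⟨Nat.card_congr e.toEquiv ▸ h.1, fun S hS => ?_⟩
  have hpre : (e ⁻¹' S).ncard ≤ k - 1 := by
    rwa [ncard_preimage_of_injective_subset_range e.injective (by simp [e.surjective.range_eq])]
  have hbij : BijOn e (e ⁻¹' S)ᶜ Sᶜ := by
    rw [← preimage_compl]; exact e.bijective.bijOn_preimage
  exact (e.induce hbij).connected_iff.mp (h.2 _ hpre)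

theorem Fragile.of_copy {H : SimpleGraph W} (f : Copy H G) (hG : G.Fragile) :
    H.Fragile :=
  fun K hK => hG (K.map f.toHom) (hK.of_iso (f.isoSubgraphMap K))

theorem Fragile.not_isKConnected (hG : G.Fragile) : ¬ G.IsKConnected 3 :=
  fun h => hG ⊤ (h.of_iso Subgraph.topIso.symm)

theorem CliqueFree.four_mul_ncard_edgeSet_le [Finite V] (h : G.CliqueFree 3) :
    4 * G.edgeSet.ncard ≤ Nat.card V ^ 2 := by
  classical
  have := Fintype.ofFinite V
  have hturan := h.card_edgeFinset_le (r := 2)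
  have hchoose : (Fintype.card V % 2).choose 2 = 0 :=
    Nat.choose_eq_zero_of_lt (Nat.mod_lt _ two_pos)
  simp only [Nat.add_one_sub_one, mul_one, hchoose, add_zero] at hturan
  rw [← coe_edgeFinset, ncard_coe_finset, Nat.card_eq_fintype_card]
  omega

theorem image_edgeSet_induce (s : Set V) :
    Sym2.map (↑) '' (G.induce s).edgeSet = G.edgeSet ∩ s.sym2 := by
  ext ⟨x, y⟩
  constructor
  · rintro ⟨⟨a, b⟩, he, hmap⟩
    simp only [Sym2.map_mk, Sym2.eq_iff] at hmap
    rcases hmap with ⟨rfl, rfl⟩ | ⟨rfl, rfl⟩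
    · exact ⟨he, a.2, b.2⟩
    · exact ⟨he.symm, b.2, a.2⟩
  · rintro ⟨hxy, hx, hy⟩
    exact ⟨s(⟨x, hx⟩, ⟨y, hy⟩), hxy, rfl⟩

theorem ncard_edgeSet_induce (s : Set V) :
    (G.induce s).edgeSet.ncard = (G.edgeSet ∩ s.sym2).ncard := by
  rw [← image_edgeSet_induce, ncard_image_of_injective _ (Sym2.map.injective Subtype.val_injective)]

theorem ncard_incidenceSet (v : V) : (G.incidenceSet v).ncard = (G.neighborSet v).ncard := by
  classical
  simp only [← Nat.card_coe_set_eq]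
  exact Nat.card_congr (G.incidenceSetEquivNeighborSet v)

theorem ncard_edgeSet_le_of_forall_adj [Finite V] {A B : Set V}
    (h : ∀ x y, G.Adj x y → x ∈ A ∧ y ∈ A ∨ x ∈ B ∧ y ∈ B) :
    G.edgeSet.ncard ≤ (G.induce A).edgeSet.ncard + (G.induce B).edgeSet.ncard := by
  have hcover : G.edgeSet ⊆ (G.edgeSet ∩ A.sym2) ∪ (G.edgeSet ∩ B.sym2) := by
    intro e he
    induction e with
    | h x y => exact (h x y he).imp (⟨he, ·⟩) (⟨he, ·⟩)
  rw [ncard_edgeSet_induce, ncard_edgeSet_induce]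
  exact (ncard_le_ncard hcover (toFinite _)).trans (ncard_union_le _ _)

theorem ncard_edgeSet_le_induce_compl_singleton [Finite V] (v : V) :
    G.edgeSet.ncard ≤ (G.induce {v}ᶜ).edgeSet.ncard + (G.neighborSet v).ncard := by
  have hcover : G.edgeSet ⊆ (G.edgeSet ∩ ({v}ᶜ : Set V).sym2) ∪ G.incidenceSet v := by
    intro e he
    induction e with
    | h x y =>
      by_cases hv : v = x ∨ v = y
      · exact Or.inr (G.mk'_mem_incidenceSet_iff.mpr ⟨he, hv⟩)
      · rw [not_or] at hv
        exact Or.inl ⟨he, Ne.symm hv.1, Ne.symm hv.2⟩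
  rw [ncard_edgeSet_induce, ← ncard_incidenceSet]
  exact (ncard_le_ncard hcover (toFinite _)).trans (ncard_union_le _ _)

theorem exists_separation_of_not_connected_induce {S : Set V} (hS : Sᶜ.Nonempty)
    (h : ¬ (G.induce Sᶜ).Connected) :
    ∃ A B : Set V, A ∪ B = univ ∧ A ∩ B = S ∧
      (∀ x y, G.Adj x y → x ∈ A ∧ y ∈ A ∨ x ∈ B ∧ y ∈ B) ∧ (A \ B).Nonempty ∧ (B \ A).Nonempty := by
  have : Nonempty (Sᶜ : Set V) := hS.to_subtype
  obtain ⟨u, w, huw⟩ : ∃ u w : (Sᶜ : Set V), ¬ (G.induce Sᶜ).Reachable u w := by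
    by_contra! hall
    exact h ⟨hall⟩
  set C : Set V := Subtype.val '' {x | (G.induce Sᶜ).Reachable u x}
  have hCS : C ⊆ Sᶜ := by
    rintro _ ⟨x, -, rfl⟩
    exact x.2
  have hclosed : ∀ x y, G.Adj x y → x ∈ C → y ∉ S → y ∈ C := by
    rintro x y hxy ⟨x, hux, rfl⟩ hy
    exact ⟨⟨y, hy⟩, hux.trans (Adj.reachable hxy), rfl⟩
  have hwC : (w : V) ∉ C := by
    rintro ⟨x, hux, hx⟩
    exact huw (Subtype.ext hx ▸ hux)
  refine ⟨C ∪ S, Cᶜ, by rw [union_right_comm, union_compl_self, univ_union], ?_, ?_,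
    ⟨u, Or.inl ⟨u, .refl _, rfl⟩, not_notMem.mpr ⟨u, .refl _, rfl⟩⟩, ⟨w, hwC, ?_⟩⟩
  · rw [union_inter_distrib_right, inter_compl_self, empty_union,
      inter_eq_left.mpr (subset_compl_comm.mp hCS)]
  · intro x y hxy
    by_cases hx : x ∈ C <;> by_cases hy : y ∈ C
    · exact Or.inl ⟨Or.inl hx, Or.inl hy⟩
    · exact Or.inl ⟨Or.inl hx, Or.inr (not_imp_comm.mp (hclosed x y hxy hx) hy)⟩
    · exact Or.inl ⟨Or.inr (not_imp_comm.mp (hclosed y x hxy.symm hy) hx), Or.inl hy⟩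
    · exact Or.inr ⟨hx, hy⟩
  · rintro (hw | hw)
    exacts [hwC hw, w.2 hw]

theorem ncard_neighborSet_lt_ncard_of_mem_sdiff [Finite V] {A B : Set V}
    (hadj : ∀ x y, G.Adj x y → x ∈ A ∧ y ∈ A ∨ x ∈ B ∧ y ∈ B) {v : V} (hv : v ∈ A \ B) :
    (G.neighborSet v).ncard < A.ncard := by
  have hsub : insert v (G.neighborSet v) ⊆ A := by
    rintro x (rfl | hx)
    · exact hv.1
    · exact ((hadj v x hx).resolve_right fun h => hv.2 h.1).2
  calc (G.neighborSet v).ncard < (insert v (G.neighborSet v)).ncard := by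
        rw [ncard_insert_of_notMem G.notMem_neighborSet_self]; omega
    _ ≤ A.ncard := ncard_le_ncard hsub

theorem Fragile.ncard_edgeSet_add_four_le [Finite V] (hG : G.Fragile)
    (htf : G.CliqueFree 3) (hn : 4 ≤ Nat.card V) :
    G.edgeSet.ncard + 4 ≤ 2 * Nat.card V := by
  induction hcard : Nat.card V using Nat.strong_induction_on generalizing V with
  | _ n IH =>
  have induced (X : Set V) (hXn : X.ncard < n) (hX4 : 4 ≤ X.ncard) :
      (G.induce X).edgeSet.ncard + 4 ≤ 2 * X.ncard := by
    rw [← Nat.card_coe_set_eq] at hXn hX4 ⊢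
    exact IH _ hXn (hG.of_copy (Copy.induce G X)) (htf.comap ⟨Copy.induce G X⟩) hX4 rfl
  by_cases hsmall : n ≤ 5
  · have hmantel := htf.four_mul_ncard_edgeSet_le
    rw [hcard] at hmantel
    interval_cases n <;> omega
  by_cases hlow : ∃ v, (G.neighborSet v).ncard ≤ 2
  · obtain ⟨v, hv⟩ := hlow
    have hcompl : ({v}ᶜ : Set V).ncard = n - 1 := by rw [ncard_compl, ncard_singleton, hcard]
    have hrest := induced {v}ᶜ (by omega) (by omega)
    have hcount := G.ncard_edgeSet_le_induce_compl_singleton v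
    omega
  push Not at hlow
  have hnot := hG.not_isKConnected
  simp only [IsKConnected, not_and, not_forall, exists_prop] at hnot
  obtain ⟨S, hS, hdisc⟩ := hnot (by omega)
  have hSc : Sᶜ.Nonempty := nonempty_of_ncard_ne_zero (by rw [ncard_compl, hcard]; omega)
  obtain ⟨A, B, hcover, hcap, hadj, ⟨a, ha⟩, ⟨b, hb⟩⟩ :=
    exists_separation_of_not_connected_induce hSc hdisc
  have hadj' : ∀ x y, G.Adj x y → x ∈ B ∧ y ∈ B ∨ x ∈ A ∧ y ∈ A := fun x y h => (hadj x y h).symm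
  have hA := ncard_neighborSet_lt_ncard_of_mem_sdiff hadj ha
  have hB := ncard_neighborSet_lt_ncard_of_mem_sdiff hadj' hb
  have hAn : A.ncard < n := hcard ▸ ncard_lt_card fun h => hb.2 (h ▸ mem_univ b)
  have hBn : B.ncard < n := hcard ▸ ncard_lt_card fun h => ha.2 (h ▸ mem_univ a)
  have hsum : A.ncard + B.ncard = n + S.ncard := by
    rw [← ncard_union_add_ncard_inter, hcover, hcap, ncard_univ, hcard]
  have hAedges := induced A hAn (by have := hlow a; omega)
  have hBedges := induced B hBn (by have := hlow b; omega)
  have hcount := ncard_edgeSet_le_of_forall_adj hadj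
  omega

end SimpleGraph

/-- Every nonempty fragile triangle-free graph contains a vertex of degree at most 3. -/
theorem statement11 {V : Type*} [Fintype V] (G : SimpleGraph V) [DecidableRel G.Adj]
    (hG : G.Fragile) (htf : G.CliqueFree 3) (hV : Nonempty V) :
    ∃ v : V, G.degree v ≤ 3 := by
  classical
  by_contra! hdeg
  obtain ⟨v⟩ := hV
  have hn : 4 ≤ Nat.card V := by
    rw [Nat.card_eq_fintype_card]
    exact (hdeg v).trans (G.degree_lt_card_verts v)
  have hsum : Fintype.card V • 4 ≤ 2 * G.edgeSet.ncard := by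
    rw [← G.coe_edgeFinset, Set.ncard_coe_finset, ← G.sum_degrees_eq_twice_card_edges]
    exact Finset.card_nsmul_le_sum _ _ _ fun v _ => hdeg v
  have hbound := hG.ncard_edgeSet_add_four_le htf hn
  rw [Nat.card_eq_fintype_card] at hbound
  rw [smul_eq_mul] at hsum
  omega
end

section
/- A finite simple graph G with girth at least 4 (i.e., containing no cycle of length 3) is fragile if and only if every subgraph H of G either has at most 2 vertices or admits a cutset of size at most 2 that is an independent set (i.e., a set S of at most 2 pairwise non-adjacent vertices of H whose deletion disconnects H). -/
/-!
Induction on the number of vertices. Three vertices span a non-edge `xy` by triangle-freeness,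
and deleting the third vertex separates `x` from `y`. A larger graph is not 3-connected, so a set
`S` of at most two vertices separates it; if `S` is not independent it is an edge `ab`. Let `B` be
the vertices of `H - {a, b}` not reachable from some fixed vertex. By induction the smaller graph
`H[B ∪ {a, b}]` has an independent cutset `T`, which misses one of `a`, `b`, say `c`. The vertices
of `H[B ∪ {a, b}] - T` not reachable from `c` avoid the edge `ab`, so they lie in `B` and all their
neighbours in `H` lie in `B ∪ {a, b}`: they stay cut off from `c` in `H - T`.
-/

namespace SimpleGraph

variable {X : Type*} {Γ : SimpleGraph X}

/-- `B ∩ A` is a union of connected components of `Γ.induce A`. -/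
def IsClosedIn (Γ : SimpleGraph X) (A B : Set X) : Prop :=
  ∀ ⦃u v⦄, u ∈ B → v ∈ A → Γ.Adj u v → v ∈ B

lemma not_connected_induce_of_isClosedIn {A B : Set X} (hB : Γ.IsClosedIn A B) {x y : X}
    (hx : x ∈ A) (hxB : x ∈ B) (hy : y ∈ A) (hyB : y ∉ B) : ¬(Γ.induce A).Connected := by
  intro hconn
  suffices h : ∀ {u v : A}, (Γ.induce A).Walk u v → u.1 ∈ B → v.1 ∈ B from
    hyB ((hconn.preconnected ⟨x, hx⟩ ⟨y, hy⟩).elim fun w => h w hxB)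
  intro u v w
  induction w with
  | nil => exact id
  | cons huv _ ih => exact fun hu => ih (hB hu (Subtype.property _) huv)

lemma exists_isClosedIn_of_not_connected_induce {A : Set X} (h : ¬(Γ.induce A).Connected)
    {k : X} (hk : k ∈ A) : ∃ B, Γ.IsClosedIn A B ∧ B ⊆ A ∧ k ∉ B ∧ B.Nonempty := by
  refine ⟨{v | ∃ hv : v ∈ A, ¬(Γ.induce A).Reachable ⟨k, hk⟩ ⟨v, hv⟩}, ?_,
    fun v hv => hv.1, fun ⟨_, hr⟩ => hr .rfl, ?_⟩
  · rintro u v ⟨hu, hku⟩ hv huv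
    exact ⟨hv, fun hkv => hku (hkv.trans (Adj.reachable (G := Γ.induce A) huv.symm))⟩
  · by_contra hempty
    refine h ((connected_iff_exists_forall_reachable _).mpr ⟨⟨k, hk⟩, fun ⟨v, hv⟩ => ?_⟩)
    by_contra hkv
    exact hempty ⟨v, hv, hkv⟩

lemma connected_induce_induce_compl_iff (s : Set X) (t : Set s) :
    ((Γ.induce s).induce tᶜ).Connected ↔ (Γ.induce (s \ Subtype.val '' t)).Connected :=
  Iso.connected_iff
    { toFun x := ⟨x.1.1, x.1.2, fun ⟨_, hy, hyx⟩ => x.2 (Subtype.ext hyx ▸ hy)⟩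
      invFun v := ⟨⟨v.1, v.2.1⟩, fun hv => v.2.2 ⟨_, hv, rfl⟩⟩
      left_inv _ := rfl
      right_inv _ := rfl
      map_rel_iff' := Iff.rfl }

lemma not_connected_induce_pair {x y : X} (hxy : x ≠ y) (h : ¬Γ.Adj x y) :
    ¬(Γ.induce {x, y}).Connected := by
  refine not_connected_induce_of_isClosedIn (B := {x}) ?_ (by simp) rfl (by simp) hxy.symm
  rintro u v rfl (rfl | rfl) huv
  exacts [rfl, absurd huv h]

lemma not_connected_induce_diff_of_isClique {s B K T : Set X} {k : X}
    (hB : Γ.IsClosedIn (s \ K) B) (hBs : B ⊆ s) (hK : Γ.IsClique K) (hKs : K ⊆ s)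
    (hk : k ∈ K) (hkT : k ∉ T) (hT : ¬(Γ.induce ((B ∪ K) \ T)).Connected) :
    ¬(Γ.induce (s \ T)).Connected := by
  have hkY : k ∈ (B ∪ K) \ T := ⟨Or.inr hk, hkT⟩
  obtain ⟨C, hC, hCY, hkC, z, hzC⟩ := exists_isClosedIn_of_not_connected_induce hT hkY
  -- `K \ T` is a clique through `k ∉ C`, so the piece `C` avoids `K` and lies in `B`
  have hCK : ∀ ⦃u⦄, u ∈ C → u ∉ K := fun u hu huK =>
    hkC (hC hu hkY (hK huK hk (ne_of_mem_of_not_mem hu hkC)))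
  have hCB : ∀ ⦃u⦄, u ∈ C → u ∈ B := fun u hu => ((hCY hu).1.resolve_right (hCK hu))
  refine not_connected_induce_of_isClosedIn (fun u v hu hv huv => ?_)
    ⟨hBs (hCB hzC), (hCY hzC).2⟩ hzC ⟨hKs hk, hkT⟩ hkC
  refine hC hu ⟨?_, hv.2⟩ huv
  by_cases hvK : v ∈ K
  · exact Or.inr hvK
  · exact Or.inl (hB (hCB hu) ⟨hv.1, hvK⟩ huv)

def HasSmallIndepCut (Γ : SimpleGraph X) (s : Set X) : Prop :=
  ∃ T : Set X, T.ncard ≤ 2 ∧ Γ.IsIndepSet T ∧ ¬(Γ.induce (s \ T)).Connected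

lemma hasSmallIndepCut_of_ncard_eq_three (htf : Γ.CliqueFree 3) {s : Set X} (hs : s.ncard = 3) :
    Γ.HasSmallIndepCut s := by
  classical
  obtain ⟨p, q, r, hpq, hpr, hqr, rfl⟩ := Set.ncard_eq_three.mp hs
  have cut : ∀ {x y m : X}, x ≠ y → x ≠ m → y ≠ m → ¬Γ.Adj x y → Γ.HasSmallIndepCut {x, y, m} :=
    fun {x y m} hxy hxm hym h => ⟨{m}, by simp, Set.pairwise_singleton _ _, by
      rw [show ({x, y, m} \ {m} : Set X) = {x, y} by aesop]
      exact not_connected_induce_pair hxy h⟩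
  by_cases hpq' : Γ.Adj p q
  · by_cases hpr' : Γ.Adj p r
    · have hqr' : ¬Γ.Adj q r := fun hqr' => htf _ (is3Clique_triple_iff.mpr ⟨hpq', hpr', hqr'⟩)
      rw [Set.insert_comm, Set.pair_comm]
      exact cut hqr hpq.symm hpr.symm hqr'
    · rw [Set.pair_comm]
      exact cut hpr hpq hqr.symm hpr'
  · exact cut hpq hpr hqr hpq'

lemma exists_cut_of_not_isKConnected_three {s : Set X} (h : ¬(Γ.induce s).IsKConnected 3)
    (hs : 3 < s.ncard) : ∃ S ⊆ s, S.ncard ≤ 2 ∧ ¬(Γ.induce (s \ S)).Connected := by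
  unfold IsKConnected at h
  push Not at h
  obtain ⟨t, ht, hconn⟩ := h (by rwa [Nat.card_coe_set_eq])
  exact ⟨Subtype.val '' t, Subtype.coe_image_subset s t,
    (Set.ncard_image_of_injective _ Subtype.val_injective).trans_le ht,
    (connected_induce_induce_compl_iff s t).not.mp hconn⟩

lemma exists_adj_of_not_isIndepSet [Finite X] {S : Set X} (h : ¬Γ.IsIndepSet S)
    (hS : S.ncard ≤ 2) : ∃ a b, Γ.Adj a b ∧ S = {a, b} := by
  obtain ⟨a, ha, b, hb, hab, hadj⟩ : ∃ a ∈ S, ∃ b ∈ S, a ≠ b ∧ Γ.Adj a b := by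
    simpa [IsIndepSet, Set.Pairwise] using h
  refine ⟨a, b, hadj, (Set.eq_of_subset_of_ncard_le ?_ ?_).symm⟩
  · exact Set.insert_subset ha (Set.singleton_subset_iff.mpr hb)
  · rwa [Set.ncard_pair hab]

lemma hasSmallIndepCut_of_cut_adj [Finite X] {s : Set X} {a b : X} (ha : a ∈ s) (hb : b ∈ s)
    (hab : Γ.Adj a b) (hs : 2 < s.ncard) (hcut : ¬(Γ.induce (s \ {a, b})).Connected)
    (ih : ∀ Y ⊂ s, 2 < Y.ncard → Γ.HasSmallIndepCut Y) :
    Γ.HasSmallIndepCut s := by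
  have hK : ({a, b} : Set X) ⊆ s := Set.insert_subset ha (Set.singleton_subset_iff.mpr hb)
  obtain ⟨k, hk⟩ := Set.sdiff_nonempty_of_ncard_lt_ncard (s := {a, b}) (t := s)
    (by rwa [Set.ncard_pair hab.ne])
  obtain ⟨B, hB, hBs, hkB, hBne⟩ := exists_isClosedIn_of_not_connected_induce hcut hk
  have hBs' : B ⊆ s := hBs.trans Set.sdiff_subset
  have hYs : B ∪ {a, b} ⊂ s := (Set.ssubset_iff_of_subset (Set.union_subset hBs' hK)).mpr
    ⟨k, hk.1, by rintro (hkB' | hkK); exacts [hkB hkB', hk.2 hkK]⟩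
  have hY : 2 < (B ∪ {a, b}).ncard := by
    rw [Set.ncard_union_eq (Set.disjoint_left.mpr fun _ hu => (hBs hu).2), Set.ncard_pair hab.ne]
    have := hBne.ncard_pos
    omega
  obtain ⟨T, hT2, hTind, hTcut⟩ := ih _ hYs hY
  obtain ⟨c, hc, hcT⟩ : ∃ c ∈ ({a, b} : Set X), c ∉ T := by
    by_contra! h
    exact hTind (h a (by simp)) (h b (by simp)) hab.ne hab
  exact ⟨T, hT2, hTind, not_connected_induce_diff_of_isClique hB hBs'
    (isClique_pair.mpr fun _ => hab) hK hc hcT hTcut⟩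

theorem hasSmallIndepCut_of_forall_not_isKConnected [Finite X] (htf : Γ.CliqueFree 3)
    (hfrag : ∀ s : Set X, ¬(Γ.induce s).IsKConnected 3) (s : Set X) (hs : 2 < s.ncard) :
    Γ.HasSmallIndepCut s := by
  induction hn : s.ncard using Nat.strong_induction_on generalizing s with
  | _ n ih =>
    subst hn
    obtain h3 | h4 : s.ncard = 3 ∨ 3 < s.ncard := by omega
    · exact hasSmallIndepCut_of_ncard_eq_three htf h3
    obtain ⟨S, hSs, hS2, hcut⟩ := exists_cut_of_not_isKConnected_three (hfrag s) h4
    by_cases hind : Γ.IsIndepSet S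
    · exact ⟨S, hS2, hind, hcut⟩
    obtain ⟨a, b, hab, rfl⟩ := exists_adj_of_not_isIndepSet hind hS2
    exact hasSmallIndepCut_of_cut_adj (hSs (by simp)) (hSs (by simp)) hab hs hcut
      fun Y hY hY2 => ih _ (Set.ncard_lt_ncard hY) Y hY2 rfl

lemma Fragile.not_isKConnected_induce_spanningCoe {G : SimpleGraph X} (hG : G.Fragile)
    (H : G.Subgraph) (s : Set X) : ¬(H.spanningCoe.induce s).IsKConnected 3 := by
  have h : (H.induce s).coe = H.spanningCoe.induce s := by
    ext u v
    exact ⟨fun huv => huv.2.2, fun huv => ⟨u.2, v.2, huv⟩⟩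
  exact h ▸ hG (H.induce s)

lemma Subgraph.exists_indepCut_of_hasSmallIndepCut [Finite X] {G : SimpleGraph X}
    {H : G.Subgraph} (hH : H.spanningCoe.HasSmallIndepCut H.verts) :
    ∃ S : Set H.verts, S.ncard ≤ 2 ∧ (∀ a ∈ S, ∀ b ∈ S, ¬H.coe.Adj a b) ∧
      ¬(H.coe.induce Sᶜ).Connected := by
  obtain ⟨T, hT2, hTind, hTcut⟩ := hH
  refine ⟨Subtype.val ⁻¹' T,
    (Set.ncard_le_ncard_of_injOn Subtype.val (fun _ ha => ha) Subtype.val_injective.injOn).trans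
      hT2,
    fun a ha b hb hab => hTind ha hb (fun h => hab.ne (Subtype.ext h)) hab, ?_⟩
  rwa [show H.coe = H.spanningCoe.induce H.verts from rfl, connected_induce_induce_compl_iff,
    Subtype.image_preimage_coe, Set.sdiff_self_inter]

end SimpleGraph

/-- A triangle-free graph is fragile iff every subgraph either has at most 2 vertices or
admits an independent cutset of size at most 2. -/
theorem statement12 {V : Type*} [Fintype V] (G : SimpleGraph V) (htf : G.CliqueFree 3) :
    G.Fragile ↔ ∀ H : G.Subgraph, Nat.card H.verts ≤ 2 ∨
      ∃ S : Set H.verts, S.ncard ≤ 2 ∧ (∀ a ∈ S, ∀ b ∈ S, ¬ H.coe.Adj a b) ∧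
        ¬ (H.coe.induce Sᶜ).Connected := by
  refine ⟨fun hfrag H => ?_, fun h H ⟨hcard, hconn⟩ => ?_⟩
  · rw [Nat.card_coe_set_eq, or_iff_not_imp_left, not_le]
    intro hs
    exact H.exists_indepCut_of_hasSmallIndepCut <|
      SimpleGraph.hasSmallIndepCut_of_forall_not_isKConnected (htf.anti H.spanningCoe_le)
        (hfrag.not_isKConnected_induce_spanningCoe H) H.verts hs
  · rcases h H with h2 | ⟨S, hS2, -, hS⟩
    · omega
    · exact hS (hconn S (by omega))
end

section
/- For every finite simple graph G, the graph G′ obtained from G by subdividing every edge twice (replacing each edge uv by a path u–x_{uv}–y_{uv}–v through two new vertices) is fragile. -/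
/-- The relation generating the double subdivision of `G`: each edge `uv` of `G` is
replaced by a path `u — (u,v) — (v,u) — v`, where the darts `(u,v)` and `(v,u)` are the
two new vertices `x_{uv}` and `y_{uv}` subdividing the edge `uv` twice. -/
def SimpleGraph.doubleSubdivisionRel {V : Type*} (G : SimpleGraph V) :
    (V ⊕ G.Dart) → (V ⊕ G.Dart) → Prop
  | Sum.inl u, Sum.inr d => d.toProd.1 = u
  | Sum.inr d, Sum.inr d' => d' = d.symm
  | _, _ => False

/-- The graph obtained from `G` by subdividing every edge twice. -/
def SimpleGraph.doubleSubdivision {V : Type*} (G : SimpleGraph V) :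
    SimpleGraph (V ⊕ G.Dart) :=
  SimpleGraph.fromRel G.doubleSubdivisionRel

/-! A 3-connected graph has minimum degree at least 3, since the neighbourhood of a vertex of
smaller degree would separate it from the remaining vertices. In the double subdivision every
edge has a subdivision vertex as an endpoint, and subdivision vertices have degree 2, so every
subgraph with an edge has a vertex of degree at most 2. -/

namespace SimpleGraph

variable {V : Type*}

theorem IsKConnected.le_ncard_neighborSet {G : SimpleGraph V} {k : ℕ} (h : G.IsKConnected k)
    (v : V) : k ≤ (G.neighborSet v).ncard := by
  by_contra! hlt
  obtain ⟨hcard, hconn⟩ := h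
  set S := G.neighborSet v
  obtain ⟨y, hy⟩ : ∃ y, y ∉ insert v S := by
    by_contra! hall
    have hle := Set.ncard_insert_le v S
    rw [Set.eq_univ_of_forall hall, Set.ncard_univ] at hle
    omega
  obtain ⟨hyv, hyS⟩ : y ≠ v ∧ y ∉ S := by simpa only [Set.mem_insert_iff, not_or] using hy
  have hvS : v ∉ S := G.irrefl
  have hvy : (⟨v, hvS⟩ : ↥Sᶜ) ≠ ⟨y, hyS⟩ := fun h => hyv (congrArg Subtype.val h).symm
  obtain ⟨p⟩ := (hconn S (by omega)).preconnected ⟨v, hvS⟩ ⟨y, hyS⟩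
  exact p.snd.prop (Walk.adj_snd (p := p) (Walk.not_nil_of_ne hvy))

variable {G : SimpleGraph V}

theorem doubleSubdivision_adj {a b : V ⊕ G.Dart} :
    G.doubleSubdivision.Adj a b ↔
      a ≠ b ∧ (G.doubleSubdivisionRel a b ∨ G.doubleSubdivisionRel b a) :=
  fromRel_adj _ _ _

theorem doubleSubdivision_not_adj_inl_inl (u v : V) :
    ¬ G.doubleSubdivision.Adj (Sum.inl u) (Sum.inl v) := by
  simp [doubleSubdivision_adj, doubleSubdivisionRel]

theorem doubleSubdivision_neighborSet_inr (d : G.Dart) :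
    G.doubleSubdivision.neighborSet (Sum.inr d) ⊆ {Sum.inl d.fst, Sum.inr d.symm} := by
  rintro (u | d') hadj <;>
    simp only [mem_neighborSet, doubleSubdivision_adj, doubleSubdivisionRel] at hadj <;>
    aesop

theorem Subgraph.ncard_coe_neighborSet_le_of_subset (H : G.Subgraph) (v : H.verts) {t : Set V}
    (ht : G.neighborSet v ⊆ t) (hfin : t.Finite) :
    (H.coe.neighborSet v).ncard ≤ t.ncard :=
  Set.ncard_le_ncard_of_injOn Subtype.val (fun _ hw => ht (H.adj_sub hw))
    Subtype.val_injective.injOn hfin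

theorem Subgraph.exists_inr_mem_verts_of_adj {H : G.doubleSubdivision.Subgraph}
    {a b : V ⊕ G.Dart} (h : H.Adj a b) : ∃ d : G.Dart, Sum.inr d ∈ H.verts := by
  rcases a with u | d
  · rcases b with v | d
    · exact absurd (H.adj_sub h) (doubleSubdivision_not_adj_inl_inl u v)
    · exact ⟨d, h.snd_mem⟩
  · exact ⟨d, h.fst_mem⟩

end SimpleGraph

open SimpleGraph in
theorem statement13_general {V : Type*} (G : SimpleGraph V) :
    G.doubleSubdivision.Fragile := by
  intro H hH
  have hdeg := hH.le_ncard_neighborSet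
  obtain ⟨x⟩ : Nonempty H.verts := (Nat.card_pos_iff.mp (by have := hH.1; omega)).1
  obtain ⟨c, hxc⟩ : (H.coe.neighborSet x).Nonempty :=
    Set.nonempty_of_ncard_ne_zero (by have := hdeg x; omega)
  obtain ⟨d, hd⟩ := H.exists_inr_mem_verts_of_adj hxc
  have hle := H.ncard_coe_neighborSet_le_of_subset ⟨_, hd⟩
    (doubleSubdivision_neighborSet_inr d) (Set.toFinite _)
  rw [Set.ncard_pair Sum.inl_ne_inr] at hle
  have := hdeg ⟨_, hd⟩
  omega

/-- The double subdivision of any finite graph is fragile. -/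
theorem statement13 {V : Type*} [Fintype V] (G : SimpleGraph V) :
    G.doubleSubdivision.Fragile :=
  statement13_general G
end

section
/- For every finite simple graph G, if G′ is the graph obtained from G by subdividing every edge twice (replacing each edge uv by a path u–x_{uv}–y_{uv}–v through two new vertices), then the independence number of G′ equals the independence number of G plus the number of edges of G, i.e., α(G′) = α(G) + |E(G)|. -/
/-- The independence number of a graph: the maximum size of a set of pairwise
non-adjacent vertices. -/
noncomputable def SimpleGraph.indepNumSSup {V : Type*} (G : SimpleGraph V) : ℕ :=
  sSup {n | ∃ s : Set V, s.ncard = n ∧ s.Pairwise fun a b => ¬ G.Adj a b}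

/-!
An independent set `T` of the double subdivision consists of a set `A` of original vertices
and a set `D` of darts (the subdivision vertices) such that no dart starts in `A` and no two
darts of `D` lie on the same edge. Hence `D` injects into the edges not contained in `A`,
while deleting one endpoint of every edge inside `A` leaves an independent set of `G`; adding
up gives `|T| ≤ α(G) + |E(G)|`. Conversely, a maximum independent set `S` of `G` together with
one dart per edge, oriented so that it does not start in `S`, is independent of that size.
-/

namespace Set

theorem ncard_image_inl_union_image_inr {α β : Type*} {A : Set α} {B : Set β}
    (hA : A.Finite := by toFinite_tac) (hB : B.Finite := by toFinite_tac) :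
    (Sum.inl '' A ∪ Sum.inr '' B : Set (α ⊕ β)).ncard = A.ncard + B.ncard := by
  rw [ncard_union_eq disjoint_image_inl_image_inr (hA.image _) (hB.image _),
    ncard_image_of_injective _ Sum.inl_injective, ncard_image_of_injective _ Sum.inr_injective]

end Set

namespace SimpleGraph

variable {V : Type*} {G : SimpleGraph V}

theorem bddAbove_ncard_isIndepSet [Finite V] (G : SimpleGraph V) :
    BddAbove {n | ∃ s : Set V, s.ncard = n ∧ G.IsIndepSet s} :=
  ⟨Nat.card V, by rintro _ ⟨s, rfl, -⟩; exact Set.ncard_le_card s⟩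

theorem IsIndepSet.ncard_le_indepNumSSup [Finite V] {s : Set V} (hs : G.IsIndepSet s) :
    s.ncard ≤ G.indepNumSSup :=
  le_csSup G.bddAbove_ncard_isIndepSet ⟨s, rfl, hs⟩

theorem exists_isIndepSet_ncard_eq_indepNumSSup [Finite V] (G : SimpleGraph V) :
    ∃ s : Set V, G.IsIndepSet s ∧ s.ncard = G.indepNumSSup := by
  have hne : {n | ∃ s : Set V, s.ncard = n ∧ G.IsIndepSet s}.Nonempty :=
    ⟨0, ∅, Set.ncard_empty V, Set.pairwise_empty _⟩
  obtain ⟨s, hs, hsG⟩ := Nat.sSup_mem hne G.bddAbove_ncard_isIndepSet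
  exact ⟨s, hsG, hs⟩

theorem exists_isIndepSet_subset_ncard_le [Finite V] (G : SimpleGraph V) (A : Set V) :
    ∃ B ⊆ A, G.IsIndepSet B ∧ A.ncard ≤ B.ncard + (G.edgeSet ∩ A.sym2).ncard := by
  set R := (fun e : Sym2 V => e.out.1) '' (G.edgeSet ∩ A.sym2)
  refine ⟨A \ R, Set.sdiff_subset, ?_, ?_⟩
  · rintro u ⟨hu, huR⟩ v ⟨hv, hvR⟩ - hadj
    have he : s(u, v) ∈ G.edgeSet ∩ A.sym2 := ⟨hadj, hu, hv⟩
    rcases Sym2.mem_iff.1 (Sym2.out_fst_mem s(u, v)) with h | h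
    · exact huR ⟨_, he, h⟩
    · exact hvR ⟨_, he, h⟩
  · calc A.ncard ≤ (A \ R).ncard + R.ncard := Set.ncard_le_ncard_sdiff_add_ncard A R
      _ ≤ (A \ R).ncard + (G.edgeSet ∩ A.sym2).ncard := by gcongr; exact Set.ncard_image_le

theorem injOn_dart_edge_iff {D : Set G.Dart} :
    Set.InjOn Dart.edge D ↔ ∀ d ∈ D, d.symm ∉ D := by
  refine ⟨fun h d hd hds => d.symm_ne (h hds hd d.edge_symm), fun h d hd d' hd' he => ?_⟩
  rcases (dart_edge_eq_iff d d').1 he with rfl | rfl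
  · rfl
  · exact absurd hd (h d' hd')

theorem exists_bijOn_dart_edge_fst_notMem {S : Set V} (hS : G.IsIndepSet S) :
    ∃ D : Set G.Dart, (∀ d ∈ D, d.fst ∉ S) ∧ Set.BijOn Dart.edge D G.edgeSet := by
  -- an edge with an endpoint in `S` points into `S`; the others follow `Sym2.out`
  refine ⟨{d | d.fst ∉ S ∧ (d.snd ∈ S ∨ d.toProd = d.edge.out)}, fun d hd => hd.1,
    fun d _ => d.edge_mem, injOn_dart_edge_iff.2 ?_, ?_⟩
  · rintro d ⟨hd₁, hd₂ | hd₂⟩ ⟨hs₁, hs₂ | hs₂⟩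
    · exact hs₁ hd₂
    · exact hs₁ hd₂
    · exact hd₁ hs₂
    · rw [Dart.edge_symm, ← hd₂] at hs₂
      exact d.fst_ne_snd (congrArg Prod.snd hs₂)
  · intro e he
    have hadj : G.Adj e.out.1 e.out.2 := by rwa [← mem_edgeSet, Sym2.mk, e.out_eq]
    have hedge : Dart.edge ⟨e.out, hadj⟩ = e := by rw [Dart.edge_mk, Sym2.mk, e.out_eq]
    by_cases h₁ : e.out.1 ∈ S
    · have h₂ : e.out.2 ∉ S := fun h₂ => hS h₁ h₂ hadj.ne hadj
      exact ⟨Dart.symm ⟨e.out, hadj⟩, ⟨h₂, Or.inl h₁⟩, by rw [Dart.edge_symm, hedge]⟩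
    · exact ⟨⟨e.out, hadj⟩, ⟨h₁, Or.inr (by rw [hedge])⟩, hedge⟩

@[simp]
theorem doubleSubdivision_adj_inl_inl (u v : V) :
    ¬ G.doubleSubdivision.Adj (.inl u) (.inl v) := by
  simp [doubleSubdivision, doubleSubdivisionRel]

@[simp]
theorem doubleSubdivision_adj_inl_inr (u : V) (d : G.Dart) :
    G.doubleSubdivision.Adj (.inl u) (.inr d) ↔ d.fst = u := by
  simp [doubleSubdivision, doubleSubdivisionRel]

@[simp]
theorem doubleSubdivision_adj_inr_inr (d d' : G.Dart) :
    G.doubleSubdivision.Adj (.inr d) (.inr d') ↔ d' = d.symm := by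
  simp only [doubleSubdivision, doubleSubdivisionRel, fromRel_adj, ne_eq, Sum.inr.injEq]
  constructor
  · rintro ⟨-, h | rfl⟩
    · exact h
    · exact (Dart.symm_symm _).symm
  · rintro rfl
    exact ⟨d.symm_ne.symm, Or.inl rfl⟩

theorem isIndepSet_doubleSubdivision_iff {A : Set V} {D : Set G.Dart} :
    G.doubleSubdivision.IsIndepSet (Sum.inl '' A ∪ Sum.inr '' D) ↔
      (∀ d ∈ D, d.fst ∉ A) ∧ Set.InjOn Dart.edge D := by
  rw [injOn_dart_edge_iff]
  constructor
  · intro h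
    refine ⟨fun d hd hdA => ?_, fun d hd hds => ?_⟩
    · exact h (Or.inl ⟨_, hdA, rfl⟩) (Or.inr ⟨d, hd, rfl⟩) Sum.inl_ne_inr (by simp)
    · exact h (Or.inr ⟨d, hd, rfl⟩) (Or.inr ⟨_, hds, rfl⟩) (by simpa using d.symm_ne.symm)
        (by simp)
  · rintro ⟨hDA, hD⟩ _ (⟨u, hu, rfl⟩ | ⟨d, hd, rfl⟩) _ (⟨v, hv, rfl⟩ | ⟨d', hd', rfl⟩) - hadj
    · exact doubleSubdivision_adj_inl_inl u v hadj
    · exact hDA d' hd' ((doubleSubdivision_adj_inl_inr u d').1 hadj ▸ hu)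
    · exact hDA d hd ((doubleSubdivision_adj_inl_inr v d).1 hadj.symm ▸ hv)
    · exact hD d hd ((doubleSubdivision_adj_inr_inr d d').1 hadj ▸ hd')

theorem ncard_add_ncard_le_of_isIndepSet_doubleSubdivision [Finite V] {A : Set V}
    {D : Set G.Dart} (h : G.doubleSubdivision.IsIndepSet (Sum.inl '' A ∪ Sum.inr '' D)) :
    A.ncard + D.ncard ≤ G.indepNumSSup + G.edgeSet.ncard := by
  obtain ⟨hDA, hD⟩ := isIndepSet_doubleSubdivision_iff.1 h
  obtain ⟨B, -, hB, hAB⟩ := G.exists_isIndepSet_subset_ncard_le A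
  have hDE : D.ncard ≤ (G.edgeSet \ A.sym2).ncard := by
    rw [← hD.ncard_image]
    refine Set.ncard_le_ncard ?_
    rintro _ ⟨d, hd, rfl⟩
    exact ⟨d.edge_mem, fun hdA' => hDA d hd (Set.mk_mem_sym2_iff.1 hdA').1⟩
  calc A.ncard + D.ncard
      ≤ B.ncard + ((G.edgeSet ∩ A.sym2).ncard + (G.edgeSet \ A.sym2).ncard) := by omega
    _ ≤ G.indepNumSSup + G.edgeSet.ncard := by
      rw [Set.ncard_inter_add_ncard_sdiff_eq_ncard]
      exact Nat.add_le_add_right hB.ncard_le_indepNumSSup _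

end SimpleGraph

/-- Poljak: `α(G') = α(G) + |E(G)|` where `G'` is the double subdivision of `G`. -/
theorem statement14 {V : Type*} [Fintype V] (G : SimpleGraph V) [DecidableRel G.Adj] :
    G.doubleSubdivision.indepNumSSup = G.indepNumSSup + G.edgeFinset.card := by
  rw [← Set.ncard_coe_finset, SimpleGraph.coe_edgeFinset]
  apply le_antisymm
  · obtain ⟨T, hT, hTcard⟩ := G.doubleSubdivision.exists_isIndepSet_ncard_eq_indepNumSSup
    rw [← Set.image_preimage_inl_union_image_preimage_inr T] at hT hTcard
    rw [← hTcard, Set.ncard_image_inl_union_image_inr]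
    exact SimpleGraph.ncard_add_ncard_le_of_isIndepSet_doubleSubdivision hT
  · obtain ⟨S, hS, hScard⟩ := G.exists_isIndepSet_ncard_eq_indepNumSSup
    obtain ⟨D, hDS, hD⟩ := SimpleGraph.exists_bijOn_dart_edge_fst_notMem hS
    rw [← hScard, ← hD.ncard_eq, ← Set.ncard_image_inl_union_image_inr]
    exact (SimpleGraph.isIndepSet_doubleSubdivision_iff.2 ⟨hDS, hD.injOn⟩).ncard_le_indepNumSSup
end

section
/- There exists a fragile finite simple graph that contains no cycle of length 4 and has chromatic number exactly 4. -/
/-!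
The graph is `K₄` on `{0, 1, 2, 3}` with the edges `02` and `03` each replaced by a Moser spindle
split at its apex: in a 3-colouring, equal colours at the two ends of a split spindle force the two
tips to share that colour, although they are adjacent. So `0, 1, 2, 3` get pairwise distinct
colours and there is no 3-colouring. No two vertices have two common neighbours, so there is no
4-cycle.

A 3-connected subgraph has minimum degree at least 3 and cannot be split by the 2-cuts `{0, 2}`
and `{0, 3}`, so its vertices lie in one of three sets: a spindle with its two cut vertices, or
`{0, 1, 2, 3}`. In the natural order of the labels, every vertex of each of these sets has at most
two later neighbours in the set, so its least vertex in the subgraph has degree at most 2.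
-/

open Finset

theorem Fin.three_eq_of_ne : ∀ x y z w : Fin 3, x ≠ y → x ≠ z → y ≠ z → w ≠ x → w ≠ y → w = z := by
  omega

namespace SimpleGraph

variable {V : Type*} {G : SimpleGraph V}

theorem IsKConnected.subset_or_compl_subset {k : ℕ} (hG : G.IsKConnected k) {S A : Set V}
    (hS : S.ncard ≤ k - 1) (hA : ∀ ⦃x y⦄, x ∈ A → G.Adj x y → y ∉ S → y ∈ A) :
    A ⊆ S ∨ Aᶜ ⊆ S := by
  by_contra! h
  simp only [Set.not_subset] at h
  obtain ⟨⟨x, hxA, hxS⟩, y, hyA, hyS⟩ := h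
  obtain ⟨p⟩ := (hG.2 S hS).preconnected ⟨x, hxS⟩ ⟨y, hyS⟩
  suffices ∀ {u v : ↥Sᶜ}, (G.induce Sᶜ).Walk u v → (u : V) ∈ A → (v : V) ∈ A from
    hyA (this p hxA)
  intro u v p
  induction p with
  | nil => exact id
  | @cons _ w _ huv _ ih => exact fun hu => ih (hA hu huv w.2)

namespace Subgraph

variable [Finite V] {H : G.Subgraph} {k : ℕ}

theorem verts_subset_or_subset_of_isKConnected (hH : H.coe.IsKConnected k) {S A : Set V}
    (hS : S.ncard ≤ k - 1) (hA : ∀ ⦃x y⦄, x ∈ A → G.Adj x y → y ∈ H.verts → y ∉ S → y ∈ A) :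
    H.verts ⊆ S ∪ A ∨ H.verts ⊆ S ∪ Aᶜ := by
  have hS' : (Subtype.val ⁻¹' S : Set H.verts).ncard ≤ k - 1 :=
    (Set.ncard_le_ncard_of_injOn Subtype.val (fun _ h => h) Subtype.val_injective.injOn).trans hS
  rcases hH.subset_or_compl_subset hS' (A := Subtype.val ⁻¹' A)
    (fun x y hx hxy hy => hA hx (H.adj_sub hxy) y.2 hy) with h | h
  · exact .inr fun v hv => or_iff_not_imp_right.mpr fun hvA => @h ⟨v, hv⟩ (not_not.mp hvA)
  · exact .inl fun v hv => or_iff_not_imp_right.mpr fun hvA => @h ⟨v, hv⟩ hvA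

theorem le_ncard_adj_of_isKConnected (hH : H.coe.IsKConnected k) {v : V} (hv : v ∈ H.verts) :
    k ≤ {w ∈ H.verts | G.Adj v w}.ncard := by
  by_contra! hlt
  have hcard : k + 1 ≤ H.verts.ncard := Nat.card_coe_set_eq H.verts ▸ hH.1
  rcases H.verts_subset_or_subset_of_isKConnected hH (S := {w ∈ H.verts | G.Adj v w}) (A := {v})
    (by omega) (fun x y hx hxy hy hyS => (hyS ⟨hy, Set.mem_singleton_iff.mp hx ▸ hxy⟩).elim)
    with h | h
  · have : H.verts ⊆ insert v {w ∈ H.verts | G.Adj v w} := by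
      simpa only [Set.union_singleton] using h
    have := (Set.ncard_le_ncard this).trans (Set.ncard_insert_le _ _)
    omega
  · exact G.irrefl ((h hv).resolve_right (by simp)).2

end Subgraph

theorem exists_ncard_adj_le_of_card_adj_gt_le [LinearOrder V] [Finite V]
    [DecidableRel G.Adj] {A : Finset V} {d : ℕ} (hA : ∀ v ∈ A, #{w ∈ A | G.Adj v w ∧ v < w} ≤ d)
    {W : Set V} (hWA : W ⊆ A) (hW : W.Nonempty) : ∃ v ∈ W, {w ∈ W | G.Adj v w}.ncard ≤ d := by
  obtain ⟨v, hmin⟩ := W.toFinite.exists_minimal hW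
  refine ⟨v, hmin.prop, le_trans ?_ (hA v (hWA hmin.prop))⟩
  rw [← Set.ncard_coe_finset]
  refine Set.ncard_le_ncard (fun w ⟨hwW, hvw⟩ => ?_)
  simp only [coe_filter, Set.mem_ofPred_eq]
  exact ⟨hWA hwW, hvw, lt_of_le_of_ne (not_lt.mp (hmin.not_lt hwW)) hvw.ne⟩

theorem Walk.IsCycle.length_ne_four
    (hG : ∀ a c, a ≠ c → (G.commonNeighbors a c).Subsingleton) {u : V} {p : G.Walk u u}
    (hp : p.IsCycle) : p.length ≠ 4 := by
  intro h4
  have hadj (i : ℕ) (hi : i < 4) : G.Adj (p.getVert i) (p.getVert (i + 1)) :=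
    p.adj_getVert_succ (h4 ▸ hi)
  have hend : p.getVert 4 = p.getVert 0 := by
    rw [← h4, Walk.getVert_length, Walk.getVert_zero]
  have h30 : G.Adj (p.getVert 3) (p.getVert 0) := hend ▸ hadj 3 (by norm_num)
  have h02 : p.getVert 0 ≠ p.getVert 2 := hp.getVert_sub_one_ne_getVert_add_one (i := 1) (by omega)
  have h13 : p.getVert 1 ≠ p.getVert 3 := hp.getVert_sub_one_ne_getVert_add_one (i := 2) (by omega)
  exact h13 <| hG _ _ h02 ⟨hadj 0 (by norm_num), (hadj 1 (by norm_num)).symm⟩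
    ⟨h30.symm, hadj 2 (by norm_num)⟩

namespace Coloring

variable (C : G.Coloring (Fin 3)) {p q a b c d e f : V}

theorem eq_of_adj_triangle (hpq : C p = C q) (hpa : G.Adj p a) (hqb : G.Adj q b)
    (hab : G.Adj a b) (hac : G.Adj a c) (hbc : G.Adj b c) : C c = C p :=
  Fin.three_eq_of_ne _ _ _ _ (C.valid hab) (C.valid hpa).symm (hpq ▸ C.valid hqb).symm
    (C.valid hac).symm (C.valid hbc).symm

theorem ne_of_splitSpindle (hpa : G.Adj p a) (hqb : G.Adj q b) (hab : G.Adj a b)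
    (hac : G.Adj a c) (hbc : G.Adj b c) (hpd : G.Adj p d) (hqe : G.Adj q e) (hde : G.Adj d e)
    (hdf : G.Adj d f) (hef : G.Adj e f) (hcf : G.Adj c f) : C p ≠ C q := fun hpq =>
  C.valid hcf <| (C.eq_of_adj_triangle hpq hpa hqb hab hac hbc).trans
    (C.eq_of_adj_triangle hpq hpd hqe hde hdf hef).symm

end Coloring

end SimpleGraph

-- `4, …, 9` is the spindle between `0` and `2` with tips `8, 9`; `10, …, 15` the one between
-- `0` and `3` with tips `14, 15`.
def spindleEdges : List (Fin 16 × Fin 16) :=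
  [(0, 1), (1, 2), (1, 3), (2, 3),
   (0, 4), (0, 6), (2, 5), (2, 7), (4, 5), (4, 8), (5, 8), (6, 7), (6, 9), (7, 9), (8, 9),
   (0, 10), (0, 12), (3, 11), (3, 13), (10, 11), (10, 14), (11, 14), (12, 13), (12, 15),
   (13, 15), (14, 15)]

def spindleGraph : SimpleGraph (Fin 16) := SimpleGraph.fromRel fun a b => (a, b) ∈ spindleEdges

instance : DecidableRel spindleGraph.Adj :=
  inferInstanceAs (DecidableRel (SimpleGraph.fromRel _).Adj)

namespace spindleGraph

open SimpleGraph

def leftCut : Finset (Fin 16) := {0, 2}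
def leftSpindle : Finset (Fin 16) := {4, 5, 6, 7, 8, 9}
def rightCut : Finset (Fin 16) := {0, 3}
def rightSpindle : Finset (Fin 16) := {10, 11, 12, 13, 14, 15}

theorem fragile : spindleGraph.Fragile := by
  intro H hH
  have hne : H.verts.Nonempty :=
    Set.nonempty_of_ncard_ne_zero (by have := Nat.card_coe_set_eq H.verts ▸ hH.1; omega)
  have hcut (S A : Finset (Fin 16)) (hS : #S ≤ 2)
      (hA : ∀ x y, x ∈ A → spindleGraph.Adj x y → y ∉ S → y ∈ A) :
      H.verts ⊆ ↑(S ∪ A) ∨ H.verts ⊆ ↑(S ∪ Aᶜ) := by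
    push_cast
    exact H.verts_subset_or_subset_of_isKConnected hH (by simpa using hS)
      (fun x y hx hxy _ hy => hA x y hx hxy hy)
  have hW : ∃ T : Finset (Fin 16), H.verts ⊆ T ∧
      ∀ v ∈ T, #{w ∈ T | spindleGraph.Adj v w ∧ v < w} ≤ 2 := by
    rcases hcut leftCut leftSpindle (by decide) (by decide) with h₁ | h₁
    · exact ⟨_, h₁, by decide⟩
    rcases hcut rightCut rightSpindle (by decide) (by decide) with h₂ | h₂
    · exact ⟨_, h₂, by decide⟩
    exact ⟨_, Set.subset_inter h₁ h₂ |>.trans (Finset.coe_inter _ _).ge, by decide⟩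
  obtain ⟨T, hWT, hT⟩ := hW
  obtain ⟨v, hv, hdeg⟩ := exists_ncard_adj_le_of_card_adj_gt_le hT hWT hne
  have := H.le_ncard_adj_of_isKConnected hH hv
  omega

theorem isCycle_length_ne_four {v : Fin 16} {c : spindleGraph.Walk v v} (hc : c.IsCycle) :
    c.length ≠ 4 :=
  hc.length_ne_four fun a b hab => Set.subsingleton_coe _ |>.mp <|
    Fintype.card_le_one_iff_subsingleton.mp <|
      (by decide : ∀ a b : Fin 16, a ≠ b → Fintype.card (spindleGraph.commonNeighbors a b) ≤ 1)
        a b hab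

def coloringFour : Fin 16 → Fin 4 := ![0, 1, 0, 2, 1, 2, 1, 2, 0, 3, 1, 0, 1, 0, 2, 3]

theorem colorable_four : spindleGraph.Colorable 4 :=
  ⟨Coloring.mk coloringFour fun h =>
    (by decide : ∀ v w, spindleGraph.Adj v w → coloringFour v ≠ coloringFour w) _ _ h⟩

theorem not_colorable_three : ¬ spindleGraph.Colorable 3 := by
  rintro ⟨C⟩
  have h02 : C 0 ≠ C 2 := by
    apply C.ne_of_splitSpindle (a := 4) (b := 5) (c := 8) (d := 6) (e := 7) (f := 9) <;> decide
  have h03 : C 0 ≠ C 3 := by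
    apply C.ne_of_splitSpindle (a := 10) (b := 11) (c := 14) (d := 12) (e := 13) (f := 15) <;>
      decide
  exact C.valid (by decide : spindleGraph.Adj 1 3) <|
    Fin.three_eq_of_ne _ _ _ _ h02 h03 (C.valid (by decide)) (C.valid (by decide))
      (C.valid (by decide))

theorem chromaticNumber_eq_four : spindleGraph.chromaticNumber = 4 :=
  chromaticNumber_eq_iff_colorable_not_colorable.mpr ⟨colorable_four, not_colorable_three⟩

end spindleGraph

/-- There is a fragile graph with no cycle of length 4 and chromatic number exactly 4. -/
theorem statement18 :
    ∃ (V : Type) (_ : Fintype V) (G : SimpleGraph V),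
      G.Fragile ∧ (∀ (v : V) (c : G.Walk v v), c.IsCycle → c.length ≠ 4) ∧
        G.chromaticNumber = 4 :=
  ⟨Fin 16, inferInstance, spindleGraph, spindleGraph.fragile,
    fun _ _ => spindleGraph.isCycle_length_ne_four, spindleGraph.chromaticNumber_eq_four⟩
end
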